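/- arXiv:math-ph/0303070 — 2 statements merged into one kernel-verified Lean document; each statement's English description precedes it below -/
import Mathlib

section
/- For a unit vector $\Psi$ in the antisymmetric subspace $\mathbb{H}^{(n)}$ ($\mathbb{H}$ finite-dimensional), the one-particle reduced density operator $(P_\Psi)_{:1}$ of the rank-one projector $P_\Psi$ satisfies $\|(P_\Psi)_{:1}\| \le 1/n$ in operator norm. -/
noncomputable section
open scoped BigOperators

/-- Single-particle Hilbert space: `ℂ^d`. -/
abbrev H (d : ℕ) := EuclideanSpace ℂ (Fin d)

/-- The `n`-fold tensor power of `ℂ^d`, realized concretely as `ℂ^(d^n)`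
with coordinates indexed by functions `Fin n → Fin d`. -/
abbrev TP (d n : ℕ) := EuclideanSpace ℂ (Fin n → Fin d)

/-- The simple tensor `x₁ ⊗ ⋯ ⊗ xₙ`. -/
def tp (d n : ℕ) (x : Fin n → H d) : TP d n :=
  WithLp.toLp 2 (fun j => ∏ i, x i (j i))

/-- The permutation operator `U_π`, `U_π (x₁ ⊗ ⋯ ⊗ xₙ) = x_{π⁻¹(1)} ⊗ ⋯ ⊗ x_{π⁻¹(n)}`. -/
def permOp (d n : ℕ) (π : Equiv.Perm (Fin n)) : TP d n →ₗ[ℂ] TP d n where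
  toFun ψ := WithLp.toLp 2 (fun j => ψ (j ∘ π))
  map_add' _ _ := rfl
  map_smul' _ _ := rfl

/-- The antisymmetrizer `A_n = (1/n!) ∑_π sgn(π) U_π`. -/
def antisym (d n : ℕ) : TP d n →ₗ[ℂ] TP d n :=
  ((Nat.factorial n : ℂ))⁻¹ •
    ∑ π : Equiv.Perm (Fin n), (((Equiv.Perm.sign π : ℤ) : ℂ)) • permOp d n π

/-- The one-particle partial trace of an operator `D` on the `(n+1)`-fold tensor power,
defined by its matrix elements
`⟨φ_a, D_{:1} φ_b⟩ = ∑_r ⟨φ_a ⊗ φ_r, D (φ_b ⊗ φ_r)⟩`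
over the standard orthonormal basis. -/
def ptrace1 (d n : ℕ)
    (D : TP d (n + 1) →ₗ[ℂ] TP d (n + 1)) : H d →ₗ[ℂ] H d :=
  Matrix.toEuclideanLin (Matrix.of fun a b => ∑ r : Fin n → Fin d,
    (D (EuclideanSpace.single (Fin.cons b r) (1 : ℂ))) (Fin.cons a r))

/-- The rank-one operator `P_u = |u⟩⟨u|` (orthogonal projection onto `ℂu` when `‖u‖ = 1`). -/
def projLine {E : Type*} [NormedAddCommGroup E] [InnerProductSpace ℂ E] (u : E) :
    E →ₗ[ℂ] E where
  toFun w := (inner ℂ u w : ℂ) • u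
  map_add' w₁ w₂ := by simp [inner_add_right, add_smul]
  map_smul' c w := by simp [inner_smul_right, mul_smul]

/-! Extend a unit vector `u` to an orthonormal basis `b` of `ℂ^d`. Then `⟨u, (P_Ψ)_{:1} u⟩` is the
total weight `∑ |⟨b_{j₀} ⊗ ⋯ ⊗ b_{jₙ}, Ψ⟩|²` over the indices with `b_{j₀} = u`. By antisymmetry
every slot carries the same weight, and coefficients with `u` in two slots vanish, so `n + 1` times
this weight is at most `‖Ψ‖² = 1`. As `(P_Ψ)_{:1}` is positive, its norm is the largest such
Rayleigh quotient. -/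

open scoped InnerProductSpace

theorem sum_pi_fin_succ {α M : Type*} [Fintype α] [AddCommMonoid M]
    {n : ℕ} (f : (Fin (n + 1) → α) → M) :
    ∑ j, f j = ∑ a, ∑ r : Fin n → α, f (Fin.cons a r) := by
  rw [← (Fin.consEquiv fun _ => α).sum_comp, Fintype.sum_prod_type]
  rfl

section Alternating

variable {ι α : Type*} [DecidableEq ι] [Fintype ι]

def IsAlternating (g : (ι → α) → ℂ) : Prop :=
  ∀ (σ : Equiv.Perm ι) (j : ι → α), g (j ∘ σ) = (Equiv.Perm.sign σ : ℂ) * g j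

theorem IsAlternating.norm_comp_perm {g : (ι → α) → ℂ} (hg : IsAlternating g)
    (σ : Equiv.Perm ι) (j : ι → α) : ‖g (j ∘ σ)‖ = ‖g j‖ := by
  rcases Int.units_eq_one_or (Equiv.Perm.sign σ) with h | h <;> simp [hg σ j, h]

theorem IsAlternating.eq_zero_of_not_injective {g : (ι → α) → ℂ} (hg : IsAlternating g)
    {j : ι → α} (hj : ¬ Function.Injective j) : g j = 0 := by
  obtain ⟨i₁, i₂, hj, hne⟩ := Function.not_injective_iff.mp hj
  have hswap : j ∘ Equiv.swap i₁ i₂ = j := by simp [Equiv.comp_swap_eq_update, hj]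
  have hsign := hg (Equiv.swap i₁ i₂) j
  rw [hswap, Equiv.Perm.sign_swap hne] at hsign
  push_cast at hsign
  linear_combination hsign / 2

end Alternating

theorem permOp_apply {d m : ℕ} (π : Equiv.Perm (Fin m)) (ψ : TP d m) (j : Fin m → Fin d) :
    permOp d m π ψ j = ψ (j ∘ π) := rfl

theorem isAlternating_of_antisym {d m : ℕ} {Ψ : TP d m} (hΨ : antisym d m Ψ = Ψ) :
    IsAlternating Ψ.ofLp := by
  have hexpand (j : Fin m → Fin d) : Ψ j = (m.factorial : ℂ)⁻¹ *
      ∑ π : Equiv.Perm (Fin m), (Equiv.Perm.sign π : ℂ) * Ψ (j ∘ π) := by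
    conv_lhs => rw [← hΨ]
    simp [antisym, permOp_apply, LinearMap.sum_apply, WithLp.ofLp_sum]
  intro σ j
  rw [hexpand, hexpand j, Finset.mul_sum, Finset.mul_sum, Finset.mul_sum]
  refine (Fintype.sum_equiv (Equiv.mulLeft σ⁻¹) _ _ fun τ => ?_).symm
  have hcomp : (j ∘ σ) ∘ σ.symm ∘ τ = j ∘ τ := by ext; simp
  simp [hcomp]
  ring

section TensorPower

variable {d : ℕ}

theorem inner_tp {n : ℕ} (x y : Fin n → H d) :
    ⟪tp d n x, tp d n y⟫_ℂ = ∏ i, ⟪x i, y i⟫_ℂ := by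
  simp only [tp, PiLp.inner_apply, RCLike.inner_apply, map_prod, ← Finset.prod_mul_distrib]
  rw [Finset.prod_univ_sum, Fintype.piFinset_univ]

theorem Orthonormal.tp_comp {ι : Type*} {v : ι → H d} (hv : Orthonormal ℂ v) (n : ℕ) :
    Orthonormal ℂ fun j : Fin n → ι => tp d n (v ∘ j) := by
  classical
  rw [orthonormal_iff_ite] at hv ⊢
  intro j k
  simp [inner_tp, hv, Fintype.prod_boole, funext_iff]

def OrthonormalBasis.tensorPower {ι : Type*} [Fintype ι] (b : OrthonormalBasis ι ℂ (H d))
    (n : ℕ) : OrthonormalBasis (Fin n → ι) ℂ (TP d n) :=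
  OrthonormalBasis.mk (b.orthonormal.tp_comp n) <|
    ((b.orthonormal.tp_comp n).linearIndependent.span_eq_top_of_card_eq_finrank' <| by
      simp [← Module.finrank_eq_card_basis b.toBasis]).ge

theorem OrthonormalBasis.tensorPower_apply {ι : Type*} [Fintype ι]
    (b : OrthonormalBasis ι ℂ (H d)) {n : ℕ} (j : Fin n → ι) :
    b.tensorPower n j = tp d n (b ∘ j) := by
  simp [OrthonormalBasis.tensorPower]

end TensorPower

section Contraction

variable {d n : ℕ}

/-- The annihilation operator `a(x)` on the first slot, without the factor `√(n + 1)`. -/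
def contractFirst (Ψ : TP d (n + 1)) (x : H d) : TP d n :=
  WithLp.toLp 2 fun r => ∑ a, starRingEnd ℂ (x a) * Ψ (Fin.cons a r)

theorem inner_tp_cons (Ψ : TP d (n + 1)) (x : H d) (y : Fin n → H d) :
    ⟪tp d (n + 1) (Fin.cons x y), Ψ⟫_ℂ = ⟪tp d n y, contractFirst Ψ x⟫_ℂ := by
  simp only [tp, contractFirst, PiLp.inner_apply, RCLike.inner_apply, Fin.prod_univ_succ,
    Fin.cons_zero, Fin.cons_succ, map_mul]
  rw [sum_pi_fin_succ, Finset.sum_comm]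
  refine Finset.sum_congr rfl fun r _ => ?_
  rw [Finset.sum_mul]
  refine Finset.sum_congr rfl fun a _ => ?_
  simp only [Fin.cons_zero, Fin.cons_succ]
  ring

end Contraction

theorem IsAlternating.inner_tp_comp {ι : Type*} {d m : ℕ} {Ψ : TP d m}
    (hΨ : IsAlternating Ψ.ofLp) (v : ι → H d) :
    IsAlternating fun j : Fin m → ι => ⟪tp d m (v ∘ j), Ψ⟫_ℂ := by
  intro σ j
  simp only [tp, PiLp.inner_apply, RCLike.inner_apply, Finset.mul_sum]
  rw [← (Equiv.arrowCongr σ.symm (Equiv.refl (Fin d))).sum_comp]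
  refine Finset.sum_congr rfl fun k _ => ?_
  have hk : Equiv.arrowCongr σ.symm (Equiv.refl (Fin d)) k = k ∘ σ := rfl
  have hprod : ∏ i, (v ∘ j ∘ σ) i ((k ∘ σ) i) = ∏ i, (v ∘ j) i (k i) :=
    Equiv.prod_comp σ fun i => v (j i) (k i)
  rw [hk, hΨ σ k, hprod]
  ring

theorem IsAlternating.card_mul_sum_norm_sq_cons_le {α : Type*} [Fintype α] [DecidableEq α]
    {n : ℕ} {Φ : (Fin (n + 1) → α) → ℂ} (hΦ : IsAlternating Φ) (a : α) :
    (n + 1) * ∑ r : Fin n → α, ‖Φ (Fin.cons a r)‖ ^ 2 ≤ ∑ j, ‖Φ j‖ ^ 2 := by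
  have hslot (i : Fin (n + 1)) :
      ∑ j : Fin (n + 1) → α, (if j i = a then ‖Φ j‖ ^ 2 else 0)
        = ∑ r : Fin n → α, ‖Φ (Fin.cons a r)‖ ^ 2 := by
    rw [← (Equiv.arrowCongr (Equiv.swap 0 i) (Equiv.refl α)).sum_comp]
    have hj (j : Fin (n + 1) → α) :
        Equiv.arrowCongr (Equiv.swap 0 i) (Equiv.refl α) j = j ∘ Equiv.swap 0 i := by
      ext; simp [Equiv.arrowCongr_apply, Equiv.symm_swap]
    simp only [hj, hΦ.norm_comp_perm, Function.comp_apply, Equiv.swap_apply_right]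
    rw [sum_pi_fin_succ]
    simp
  -- Pauli exclusion: a nonzero coefficient has an injective index, which meets `a` at most once.
  have hexclusion (j : Fin (n + 1) → α) :
      ∑ i, (if j i = a then ‖Φ j‖ ^ 2 else 0) ≤ ‖Φ j‖ ^ 2 := by
    by_cases hj : Function.Injective j
    · rw [Finset.sum_ite, Finset.sum_const_zero, add_zero, Finset.sum_const, nsmul_eq_mul]
      refine mul_le_of_le_one_left (by positivity) ?_
      have hcard : (Finset.univ.filter fun i => j i = a).card ≤ 1 :=
        Finset.card_le_one.mpr fun i₁ h₁ i₂ h₂ => by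
          simp only [Finset.mem_filter] at h₁ h₂
          exact hj (h₁.2.trans h₂.2.symm)
      exact_mod_cast hcard
    · simp [hΦ.eq_zero_of_not_injective hj]
  calc (n + 1) * ∑ r : Fin n → α, ‖Φ (Fin.cons a r)‖ ^ 2
      = ∑ i, ∑ j : Fin (n + 1) → α, (if j i = a then ‖Φ j‖ ^ 2 else 0) := by simp [hslot]
    _ = ∑ j, ∑ i, (if j i = a then ‖Φ j‖ ^ 2 else 0) := Finset.sum_comm
    _ ≤ ∑ j, ‖Φ j‖ ^ 2 := Finset.sum_le_sum fun j _ => hexclusion j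

theorem norm_contractFirst_sq_le {d n : ℕ} {Ψ : TP d (n + 1)} (hΨ : antisym d (n + 1) Ψ = Ψ)
    {u : H d} (hu : ‖u‖ = 1) :
    (n + 1) * ‖contractFirst Ψ u‖ ^ 2 ≤ ‖Ψ‖ ^ 2 := by
  have hu' : Orthonormal ℂ ((↑) : ({u} : Set (H d)) → H d) :=
    orthonormal_subsingleton_iff.mpr fun ⟨_, rfl⟩ => hu
  obtain ⟨s, b, hus, hb⟩ := hu'.exists_orthonormalBasis_extension
  have hb₀ : b ⟨u, hus rfl⟩ = u := by rw [hb]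
  calc (n + 1) * ‖contractFirst Ψ u‖ ^ 2
      = (n + 1) * ∑ r, ‖⟪tp d (n + 1) (b ∘ Fin.cons ⟨u, hus rfl⟩ r), Ψ⟫_ℂ‖ ^ 2 := by
        rw [← (b.tensorPower n).sum_sq_norm_inner_right]
        simp only [b.tensorPower_apply, Fin.comp_cons, hb₀, inner_tp_cons]
    _ ≤ ∑ j, ‖⟪tp d (n + 1) (b ∘ j), Ψ⟫_ℂ‖ ^ 2 :=
        ((isAlternating_of_antisym hΨ).inner_tp_comp b).card_mul_sum_norm_sq_cons_le _
    _ = ‖Ψ‖ ^ 2 := by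
        rw [← (b.tensorPower (n + 1)).sum_sq_norm_inner_right]
        simp only [b.tensorPower_apply]

theorem inner_ptrace1_projLine {d n : ℕ} (Ψ : TP d (n + 1)) (x y : H d) :
    ⟪x, ptrace1 d n (projLine Ψ) y⟫_ℂ = ⟪contractFirst Ψ y, contractFirst Ψ x⟫_ℂ := by
  simp only [ptrace1, projLine, LinearMap.coe_mk, AddHom.coe_mk, EuclideanSpace.inner_single_right,
    one_mul, PiLp.smul_apply, smul_eq_mul]
  simp only [contractFirst, Matrix.toLpLin_apply, PiLp.inner_apply,
    RCLike.inner_apply, Matrix.mulVec, dotProduct, Matrix.of_apply, map_sum,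
    map_mul, Complex.conj_conj, Finset.sum_mul, Finset.mul_sum]
  conv_rhs => rw [Finset.sum_comm]
  rw [Finset.sum_comm]
  refine Finset.sum_congr rfl fun b _ => ?_
  rw [Finset.sum_comm]
  refine Finset.sum_congr rfl fun r _ => Finset.sum_congr rfl fun a _ => ?_
  ring

theorem ContinuousLinearMap.opNorm_le_of_abs_re_inner_self_le {𝕜 E : Type*} [RCLike 𝕜]
    [NormedAddCommGroup E] [InnerProductSpace 𝕜 E] (T : E →L[𝕜] E)
    (hT : (T : E →ₗ[𝕜] E).IsSymmetric) {C : ℝ} (hC : 0 ≤ C)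
    (h : ∀ u, ‖u‖ = 1 → |RCLike.re ⟪T u, u⟫_𝕜| ≤ C) : ‖T‖ ≤ C := by
  rw [T.norm_eq_iSup_rayleighQuotient hT]
  refine ciSup_le fun x => ?_
  rcases eq_or_ne x 0 with rfl | hx
  · simpa using hC
  have hc : (‖x‖⁻¹ : 𝕜) ≠ 0 := by simpa using hx
  rw [← T.rayleigh_smul x hc, ContinuousLinearMap.rayleighQuotient, norm_smul_inv_norm hx,
    one_pow, div_one]
  exact h _ (norm_smul_inv_norm hx)

/-- For a unit vector `Ψ` in the antisymmetric subspace of `ℍ^{⊗(n+1)}`, the one-particle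
reduced density operator of the rank-one projector `P_Ψ` satisfies
`‖(P_Ψ)_{:1}‖ ≤ 1/(n+1)` in operator norm. -/
theorem stmt8 (d n : ℕ) (Ψ : TP d (n + 1)) (hΨ : ‖Ψ‖ = 1)
    (hanti : antisym d (n + 1) Ψ = Ψ) :
    ‖LinearMap.toContinuousLinearMap (ptrace1 d n (projLine Ψ))‖ ≤ 1 / (n + 1) := by
  set T := LinearMap.toContinuousLinearMap (ptrace1 d n (projLine Ψ))
  have hT (x y : H d) : ⟪x, T y⟫_ℂ = ⟪contractFirst Ψ y, contractFirst Ψ x⟫_ℂ :=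
    inner_ptrace1_projLine Ψ x y
  refine T.opNorm_le_of_abs_re_inner_self_le (fun x y => ?_) (by positivity) fun u hu => ?_
  · rw [ContinuousLinearMap.coe_coe, ← inner_conj_symm, hT, hT, inner_conj_symm]
  · rw [inner_re_symm, hT, inner_self_eq_norm_sq, abs_of_nonneg (sq_nonneg _),
      le_div_iff₀' (by positivity)]
    simpa [hΨ] using norm_contractFirst_sq_le hanti hu
end
end

section
/- Let $T$ be a Hermitian operator on a finite-dimensional Hilbert space with trace norm $\|T\|_1$. Then the trace norm of $T^{\otimes n} n! A_n$ on $\mathbb{H}^{\otimes n}$ satisfies $\|T^{\otimes n} n! A_n\|_1 \le \|T\|_1^n$. -/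
/-!
Let `P = n! Aₙ = ∑_π sgn(π) U_π`. It commutes with every tensor power and `P² = n! P`, so if
`S = |T|` then `S^{⊗n} P` is positive semidefinite and squares to `(T^{⊗n} P)ᴴ (T^{⊗n} P)`; hence
`‖T^{⊗n} P‖₁ = Tr (S^{⊗n} P)`. In an eigenbasis of `S`, with eigenvalues `λ ≥ 0`, this trace is
the sum of `∏ᵢ λ_{j i}` over the injective `j : Fin n → Fin d` only, a subsum of
`∑_j ∏ᵢ λ_{j i} = (∑ λ)ⁿ = ‖T‖₁ⁿ`.
-/

noncomputable section
open scoped BigOperators ComplexOrder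

/-- The trace norm `‖M‖₁ = Tr √(Mᴴ M)` of a complex matrix. -/
def traceNorm {m : Type*} [Fintype m] [DecidableEq m] (M : Matrix m m ℂ) : ℝ :=
  ((Matrix.posSemidef_conjTranspose_mul_self M).1.eigenvectorUnitary.1 *
    Matrix.diagonal (((↑) : ℝ → ℂ) ∘ Real.sqrt ∘ (Matrix.posSemidef_conjTranspose_mul_self M).1.eigenvalues) *
    (star (Matrix.posSemidef_conjTranspose_mul_self M).1.eigenvectorUnitary :
      Matrix m m ℂ)).trace.re

/-- The matrix of the permutation operator `U_π` on `ℍ^{⊗n}` in the standard basis. -/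
def permMat (d n : ℕ) (π : Equiv.Perm (Fin n)) :
    Matrix (Fin n → Fin d) (Fin n → Fin d) ℂ :=
  Matrix.of fun j k => if k = j ∘ π then 1 else 0

/-- The matrix of the antisymmetrizer `Aₙ = (1/n!) ∑_π sgn(π) U_π`. -/
def antisymMat (d n : ℕ) : Matrix (Fin n → Fin d) (Fin n → Fin d) ℂ :=
  ((Nat.factorial n : ℂ))⁻¹ •
    ∑ π : Equiv.Perm (Fin n), (((Equiv.Perm.sign π : ℤ) : ℂ)) • permMat d n π

/-- The matrix of the `n`-fold tensor power `T^{⊗n}` of an operator `T` on `ℂ^d`. -/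
def tensorPowMat (d n : ℕ) (T : Matrix (Fin d) (Fin d) ℂ) :
    Matrix (Fin n → Fin d) (Fin n → Fin d) ℂ :=
  Matrix.of fun j k => ∏ i, T (j i) (k i)


open Matrix

section TensorPow

variable {d : ℕ} (n : ℕ)

lemma tensorPowMat_mul (A B : Matrix (Fin d) (Fin d) ℂ) :
    tensorPowMat d n (A * B) = tensorPowMat d n A * tensorPowMat d n B := by
  ext j k
  simp only [tensorPowMat, mul_apply, of_apply, Finset.prod_univ_sum, Fintype.piFinset_univ,
    Finset.prod_mul_distrib]

lemma tensorPowMat_one : tensorPowMat d n (1 : Matrix (Fin d) (Fin d) ℂ) = 1 := by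
  ext j k
  simp [tensorPowMat, one_apply, Finset.prod_boole, funext_iff]

lemma tensorPowMat_conjTranspose (A : Matrix (Fin d) (Fin d) ℂ) :
    tensorPowMat d n Aᴴ = (tensorPowMat d n A)ᴴ := by
  ext j k
  simp [tensorPowMat, conjTranspose_apply]

lemma tensorPowMat_diagonal (c : Fin d → ℂ) :
    tensorPowMat d n (diagonal c) = diagonal fun j => ∏ i, c (j i) := by
  ext j k
  by_cases h : j = k
  · simp [h, tensorPowMat]
  · obtain ⟨i, hi⟩ := Function.ne_iff.mp h
    simp only [tensorPowMat, of_apply, diagonal_apply_ne _ h]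
    exact Finset.prod_eq_zero (Finset.mem_univ i) (diagonal_apply_ne _ hi)

end TensorPow

section Antisymmetrizer

variable (d : ℕ) {n : ℕ}

lemma permMat_mul (π σ : Equiv.Perm (Fin n)) :
    permMat d n π * permMat d n σ = permMat d n (π * σ) := by
  ext j k
  simp only [mul_apply, permMat, of_apply, ite_mul, one_mul, zero_mul,
    Finset.sum_ite_eq', Finset.mem_univ, if_true]
  rfl

lemma permMat_conjTranspose (π : Equiv.Perm (Fin n)) :
    (permMat d n π)ᴴ = permMat d n π⁻¹ := by
  ext j k
  have : j = k ∘ π ↔ k = j ∘ ⇑π⁻¹ := by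
    constructor <;> rintro rfl <;> ext i <;> simp
  simp only [conjTranspose_apply, permMat, of_apply, this]
  split_ifs <;> simp

lemma permMat_commute_tensorPowMat (π : Equiv.Perm (Fin n)) (A : Matrix (Fin d) (Fin d) ℂ) :
    Commute (permMat d n π) (tensorPowMat d n A) := by
  ext j k
  have hk : ∀ l : Fin n → Fin d, l = k ∘ ⇑π⁻¹ ↔ k = l ∘ π := by
    intro l; constructor <;> rintro rfl <;> ext i <;> simp
  simp only [mul_apply, permMat, tensorPowMat, of_apply, ite_mul, one_mul, zero_mul, mul_ite,
    mul_zero, mul_one, Finset.sum_ite_eq', Finset.mem_univ, if_true, ← hk]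
  exact (Equiv.prod_comp π⁻¹ fun i => A (j (π i)) (k i)).symm.trans (by simp)

variable (n)

def signedPermSum : Matrix (Fin n → Fin d) (Fin n → Fin d) ℂ :=
  ∑ π : Equiv.Perm (Fin n), ((Equiv.Perm.sign π : ℤ) : ℂ) • permMat d n π

lemma factorial_smul_antisymMat :
    (n.factorial : ℂ) • antisymMat d n = signedPermSum d n := by
  rw [antisymMat, smul_smul, mul_inv_cancel₀ (by exact_mod_cast n.factorial_ne_zero), one_smul,
    signedPermSum]

lemma signedPermSum_conjTranspose : (signedPermSum d n)ᴴ = signedPermSum d n := by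
  rw [signedPermSum, conjTranspose_sum]
  refine Fintype.sum_equiv (Equiv.inv _) _ _ fun π => ?_
  simp [permMat_conjTranspose]

lemma signedPermSum_mul_self :
    signedPermSum d n * signedPermSum d n = (n.factorial : ℂ) • signedPermSum d n := by
  have : ∀ π : Equiv.Perm (Fin n),
      ∑ σ, (((Equiv.Perm.sign π : ℤ) : ℂ) • permMat d n π) *
        (((Equiv.Perm.sign σ : ℤ) : ℂ) • permMat d n σ) = signedPermSum d n := fun π => by
    refine Fintype.sum_equiv (Equiv.mulLeft π) _ _ fun σ => ?_
    rw [smul_mul_smul_comm, permMat_mul, Equiv.coe_mulLeft, Equiv.Perm.sign_mul]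
    push_cast; rfl
  conv_lhs => rw [signedPermSum, Finset.sum_mul_sum]
  rw [Finset.sum_congr rfl fun π _ => this π, Finset.sum_const, Finset.card_univ,
    Fintype.card_perm, Fintype.card_fin, Nat.cast_smul_eq_nsmul]

lemma signedPermSum_commute_tensorPowMat (A : Matrix (Fin d) (Fin d) ℂ) :
    Commute (signedPermSum d n) (tensorPowMat d n A) :=
  Commute.sum_left _ _ _ fun π _ => (permMat_commute_tensorPowMat d π A).smul_left _

/-- The diagonal entry `Σ_π sgn(π) [j ∘ π = j]` is the determinant of the matrix
`[j a = j b]`, which has two equal rows unless `j` is injective. -/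
lemma signedPermSum_apply_self (j : Fin n → Fin d) :
    signedPermSum d n j j = if Function.Injective j then 1 else 0 := by
  have hdet : signedPermSum d n j j = (of fun a b => if j a = j b then (1 : ℂ) else 0).det := by
    simp only [signedPermSum, Matrix.sum_apply, Matrix.smul_apply, permMat, of_apply, det_apply',
      smul_eq_mul, Finset.prod_boole, Finset.mem_univ, true_implies, funext_iff,
      Function.comp_apply, eq_comm]
  rw [hdet]
  split_ifs with hj
  · convert det_one (R := ℂ) (n := Fin n)
    ext a b
    simp [one_apply, hj.eq_iff]
  · obtain ⟨a, b, hab, hne⟩ := Function.not_injective_iff.mp hj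
    exact det_zero_of_row_eq hne (funext fun c => by simp [hab])

end Antisymmetrizer

section TraceNorm

open scoped MatrixOrder

variable {m : Type*} [Fintype m] [DecidableEq m]

/-- `traceNorm M` is `Re Tr √(Mᴴ M)`, and the positive semidefinite square root is unique. -/
lemma traceNorm_eq_re_trace (M : Matrix m m ℂ) {W : Matrix m m ℂ} (hW : W.PosSemidef)
    (hWW : W * W = Mᴴ * M) : traceNorm M = W.trace.re := by
  have hMM := posSemidef_conjTranspose_mul_self M
  have hsqrt : CFC.sqrt (Mᴴ * M) = W := CFC.sqrt_unique hWW hW.nonneg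
  rw [← hsqrt, CFC.sqrt_eq_cfc, cfc_nnreal_eq_real _ _ hMM.nonneg, hMM.1.cfc_eq,
    IsHermitian.cfc, Unitary.conjStarAlgAut_apply, traceNorm]
  congr 5
  funext i
  simp [Real.coe_toNNReal', max_eq_left (hMM.eigenvalues_nonneg i)]

lemma exists_posSemidef_mul_self_eq_conjTranspose_mul_self (M : Matrix m m ℂ) :
    ∃ S : Matrix m m ℂ, S.PosSemidef ∧ S * S = Mᴴ * M :=
  ⟨CFC.sqrt (Mᴴ * M), (CFC.sqrt_nonneg _).posSemidef,
    CFC.sqrt_mul_sqrt_self _ (posSemidef_conjTranspose_mul_self M).nonneg⟩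

end TraceNorm

section TensorPowAntisymmetrizer

variable {d : ℕ} (n : ℕ)

lemma conjTranspose_tensorPowMat_mul_signedPermSum (A : Matrix (Fin d) (Fin d) ℂ) :
    (tensorPowMat d n A * signedPermSum d n)ᴴ = tensorPowMat d n Aᴴ * signedPermSum d n := by
  rw [conjTranspose_mul, signedPermSum_conjTranspose, ← tensorPowMat_conjTranspose,
    (signedPermSum_commute_tensorPowMat d n Aᴴ).eq]

lemma tensorPowMat_mul_signedPermSum_mul (A B : Matrix (Fin d) (Fin d) ℂ) :
    tensorPowMat d n A * signedPermSum d n * (tensorPowMat d n B * signedPermSum d n) =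
      (n.factorial : ℂ) • (tensorPowMat d n (A * B) * signedPermSum d n) := by
  rw [tensorPowMat_mul, mul_assoc, ← mul_assoc (signedPermSum d n),
    (signedPermSum_commute_tensorPowMat d n B).eq]
  simp only [mul_assoc, signedPermSum_mul_self, mul_smul_comm]

open scoped MatrixOrder in
lemma posSemidef_tensorPowMat {S : Matrix (Fin d) (Fin d) ℂ} (hS : S.PosSemidef) :
    (tensorPowMat d n S).PosSemidef := by
  obtain ⟨R, rfl⟩ := CStarAlgebra.nonneg_iff_eq_star_mul_self.mp hS.nonneg
  rw [star_eq_conjTranspose, tensorPowMat_mul, tensorPowMat_conjTranspose]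
  exact posSemidef_conjTranspose_mul_self _

/-- `S^{⊗n} P = Pᴴ S^{⊗n} P / n!`. -/
lemma posSemidef_tensorPowMat_mul_signedPermSum {S : Matrix (Fin d) (Fin d) ℂ}
    (hS : S.PosSemidef) : (tensorPowMat d n S * signedPermSum d n).PosSemidef := by
  have hfac : (n.factorial : ℂ) ≠ 0 := by exact_mod_cast n.factorial_ne_zero
  have h : tensorPowMat d n S * signedPermSum d n = (n.factorial : ℂ)⁻¹ •
      ((signedPermSum d n)ᴴ * tensorPowMat d n S * signedPermSum d n) := by
    rw [signedPermSum_conjTranspose, (signedPermSum_commute_tensorPowMat d n S).eq, mul_assoc,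
      signedPermSum_mul_self, mul_smul_comm, smul_smul, inv_mul_cancel₀ hfac, one_smul]
  rw [h]
  exact ((posSemidef_tensorPowMat n hS).conjTranspose_mul_mul_same _).smul
    (inv_nonneg.mpr (by exact_mod_cast (n.factorial).zero_le))

lemma trace_tensorPowMat_diagonal_mul_signedPermSum (c : Fin d → ℂ) :
    (tensorPowMat d n (diagonal c) * signedPermSum d n).trace =
      ∑ j : Fin n → Fin d, if Function.Injective j then ∏ i, c (j i) else 0 := by
  simp [trace, tensorPowMat_diagonal, diagonal_mul, signedPermSum_apply_self]

lemma trace_tensorPowMat_conj_mul_signedPermSum {U : Matrix (Fin d) (Fin d) ℂ}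
    (hU : Uᴴ * U = 1) (D : Matrix (Fin d) (Fin d) ℂ) :
    (tensorPowMat d n (U * D * Uᴴ) * signedPermSum d n).trace =
      (tensorPowMat d n D * signedPermSum d n).trace := by
  calc (tensorPowMat d n (U * D * Uᴴ) * signedPermSum d n).trace
      = (tensorPowMat d n U *
          (tensorPowMat d n D * signedPermSum d n * tensorPowMat d n Uᴴ)).trace := by
        rw [tensorPowMat_mul, tensorPowMat_mul, mul_assoc _ (tensorPowMat d n Uᴴ),
          ← (signedPermSum_commute_tensorPowMat d n Uᴴ).eq]
        simp only [mul_assoc]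
    _ = (tensorPowMat d n D * signedPermSum d n *
          (tensorPowMat d n Uᴴ * tensorPowMat d n U)).trace := by
        rw [trace_mul_comm, mul_assoc]
    _ = (tensorPowMat d n D * signedPermSum d n).trace := by
        rw [← tensorPowMat_mul, hU, tensorPowMat_one, mul_one]

lemma re_trace_tensorPowMat_mul_signedPermSum_le {S : Matrix (Fin d) (Fin d) ℂ}
    (hS : S.PosSemidef) :
    (tensorPowMat d n S * signedPermSum d n).trace.re ≤ S.trace.re ^ n := by
  set μ := hS.1.eigenvalues
  set U : Matrix (Fin d) (Fin d) ℂ := ↑hS.1.eigenvectorUnitary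
  have hspec : S = U * diagonal (RCLike.ofReal ∘ μ) * Uᴴ := hS.1.spectral_theorem
  have hterm : ∀ j : Fin n → Fin d,
      (if Function.Injective j then ∏ i, (RCLike.ofReal ∘ μ) (j i) else 0 : ℂ) =
        ((if Function.Injective j then ∏ i, μ (j i) else 0 : ℝ) : ℂ) := by
    intro j; split_ifs <;> simp
  rw [hS.1.trace_eq_sum_eigenvalues]
  conv_lhs => rw [hspec]
  rw [trace_tensorPowMat_conj_mul_signedPermSum n (Unitary.coe_star_mul_self _),
    trace_tensorPowMat_diagonal_mul_signedPermSum]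
  simp only [hterm, ← Complex.ofReal_sum, Complex.ofReal_re, Complex.re_sum]
  rw [Finset.sum_pow', Fintype.piFinset_univ]
  refine Finset.sum_le_sum fun j _ => ?_
  split_ifs
  · exact le_rfl
  · exact Finset.prod_nonneg fun i _ => hS.eigenvalues_nonneg _

end TensorPowAntisymmetrizer

theorem stmt10_general (d n : ℕ) (T : Matrix (Fin d) (Fin d) ℂ) :
    traceNorm (tensorPowMat d n T * ((Nat.factorial n : ℂ) • antisymMat d n))
      ≤ (traceNorm T) ^ n := by
  obtain ⟨S, hS, hSS⟩ := exists_posSemidef_mul_self_eq_conjTranspose_mul_self T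
  have hWW : tensorPowMat d n S * signedPermSum d n * (tensorPowMat d n S * signedPermSum d n) =
      (tensorPowMat d n T * signedPermSum d n)ᴴ * (tensorPowMat d n T * signedPermSum d n) := by
    rw [conjTranspose_tensorPowMat_mul_signedPermSum, tensorPowMat_mul_signedPermSum_mul,
      tensorPowMat_mul_signedPermSum_mul, hSS]
  rw [factorial_smul_antisymMat,
    traceNorm_eq_re_trace _ (posSemidef_tensorPowMat_mul_signedPermSum n hS) hWW,
    traceNorm_eq_re_trace T hS hSS]
  exact re_trace_tensorPowMat_mul_signedPermSum_le n hS

/-- For a Hermitian operator `T` on a finite-dimensional Hilbert space, the trace norm of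
`T^{⊗n} n! Aₙ` satisfies `‖T^{⊗n} n! Aₙ‖₁ ≤ ‖T‖₁^n`. -/
theorem stmt10 (d n : ℕ) (T : Matrix (Fin d) (Fin d) ℂ) (hT : T.IsHermitian) :
    traceNorm (tensorPowMat d n T * ((Nat.factorial n : ℂ) • antisymMat d n))
      ≤ (traceNorm T) ^ n :=
  stmt10_general d n T
end
end
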